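/- Let d ≥ 3, δ > 0, C₀ > 0, and let g : (0,δ) → [0,∞) be measurable and locally integrable, satisfying ∫_{t₁}^{t₂} g(t) (dt/t) ≤ C₀ (log(t₂/t₁))^{d/(d+1)} for all 0 < 10t₁ < t₂ < δ. Then there exist sequences μ_j ↓ 0, t_j ∈ (4μ_j/3, 13μ_j/9) and t_j' ∈ (14μ_j/9, 5μ_j/3) such that: (1/μ_j) ∫_{μ_j}^{2μ_j} g(t)dt → 0 as j → ∞, and sup_{0<τ<t_j/16} (1/τ) ∫_{|t−t_j|<τ} g(t)dt + sup_{0<τ<t_j'/16} (1/τ) ∫_{|t−t_j'|<τ} g(t)dt → 0 as j → ∞. -/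

import Mathlib

noncomputable section

open MeasureTheory Filter Topology Metric Set
open scoped ENNReal

namespace SR

abbrev Spc (d : ℕ) := EuclideanSpace ℝ (Fin d)

variable {d : ℕ}

/-- the critical exponent `2* = 2d/(d-2)` -/
def tStar (d : ℕ) : ℝ := 2 * d / (d - 2)

/-- the Strichartz exponent `2(d+1)/(d-2)` -/
def sExp (d : ℕ) : ℝ := 2 * (d + 1) / (d - 2)

/-- squared norm of the spatial gradient -/
def gradSq (f : Spc d → ℝ) (x : Spc d) : ℝ := ‖gradient f x‖ ^ 2

/-- energy of a pair of functions on a set `E` (square of the `Ḣ¹×L²(E)` norm) -/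
def energyOn (f g : Spc d → ℝ) (E : Set (Spc d)) : ℝ :=
  ∫ x in E, (gradSq f x + (g x) ^ 2)

def energy (f g : Spc d → ℝ) : ℝ := energyOn f g Set.univ

/-- Strichartz norm over a spacetime region `S ⊆ ℝ × ℝ^d` -/
def SNorm (u : ℝ → Spc d → ℝ) (S : Set (ℝ × Spc d)) : ℝ≥0∞ :=
  eLpNorm (fun p : ℝ × Spc d => u p.1 p.2) (ENNReal.ofReal (sExp d)) (volume.restrict S)

def SNormI (u : ℝ → Spc d → ℝ) (I : Set ℝ) : ℝ≥0∞ :=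
  SNorm u (I ×ˢ (Set.univ : Set (Spc d)))

def timeDeriv (u : ℝ → Spc d → ℝ) (t : ℝ) (x : Spc d) : ℝ := deriv (fun s => u s x) t

/-- smooth compactly supported test function on spacetime, with time support inside `I` -/
structure IsTest (φ : ℝ → Spc d → ℝ) (I : Set ℝ) : Prop where
  smooth : ContDiff ℝ (⊤ : ℕ∞) (fun p : ℝ × Spc d => φ p.1 p.2)
  cpt : HasCompactSupport (fun p : ℝ × Spc d => φ p.1 p.2)
  supp : ∀ t, t ∉ interior I → ∀ x, φ t x = 0

/-- the Laplacian -/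
def lap (f : Spc d → ℝ) (x : Spc d) : ℝ :=
  ∑ i, fderiv ℝ (fun y => fderiv ℝ f y (EuclideanSpace.single i 1)) x (EuclideanSpace.single i 1)

/-- `u'` is the distributional time derivative of `u` on the time interval `I` -/
def IsTimeDerivOn (u u' : ℝ → Spc d → ℝ) (I : Set ℝ) : Prop :=
  ∀ φ : ℝ → Spc d → ℝ, IsTest φ I →
    ∫ p : ℝ × Spc d, u p.1 p.2 * deriv (fun s => φ s p.2) p.1
      = - ∫ p : ℝ × Spc d, u' p.1 p.2 * φ p.1 p.2

/-- distributional solution of `∂ₜₜu - Δu = F` on the time interval `I` -/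
def IsWaveWith (u : ℝ → Spc d → ℝ) (F : ℝ → Spc d → ℝ) (I : Set ℝ) : Prop :=
  ∀ φ : ℝ → Spc d → ℝ, IsTest φ I →
    ∫ p : ℝ × Spc d,
        u p.1 p.2 * (deriv (fun s => deriv (fun r => φ r p.2) s) p.1 - lap (fun y => φ p.1 y) p.2)
      = ∫ p : ℝ × Spc d, F p.1 p.2 * φ p.1 p.2

/-- the focusing energy critical nonlinearity `|v|^{2*-2} v` -/
def NL (d : ℕ) (v : ℝ) : ℝ := |v| ^ (tStar d - 2) * v

def FiniteEnergyOn (u u' : ℝ → Spc d → ℝ) (I : Set ℝ) : Prop :=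
  ∀ t ∈ I, Integrable (fun x => gradSq (u t) x + (u' t x) ^ 2)

def EnergyContinuousOn (u u' : ℝ → Spc d → ℝ) (I : Set ℝ) : Prop :=
  ∀ t₀ ∈ I, Tendsto (fun t => energy (fun x => u t x - u t₀ x) (fun x => u' t x - u' t₀ x))
    (nhdsWithin t₀ I) (nhds 0)

/-- solution (in the Duhamel/distributional sense) of
`∂ₜₜu - Δu = |u|^{2*-2}u + f` on the time interval `I`, in `C(I, Ḣ¹×L²)`,
with finite Strichartz norm on compact subintervals. -/
structure IsSolutionWithSource (d : ℕ) (u u' f : ℝ → Spc d → ℝ) (I : Set ℝ) : Prop where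
  timederiv : IsTimeDerivOn u u' I
  waveeq : IsWaveWith u (fun t x => NL d (u t x) + f t x) I
  cont : EnergyContinuousOn u u' I
  finite : FiniteEnergyOn u u' I
  strichartz : ∀ J : Set ℝ, IsCompact J → J ⊆ I → SNormI u J < ⊤

/-- solution of the focusing energy-critical wave equation on `I` -/
def IsSolution (d : ℕ) (u u' : ℝ → Spc d → ℝ) (I : Set ℝ) : Prop :=
  IsSolutionWithSource d u u' (fun _ _ => 0) I

/-- free radiation : finite-energy solution of the linear wave equation on `ℝ` -/
structure IsFreeWave (d : ℕ) (U U' : ℝ → Spc d → ℝ) : Prop where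
  timederiv : IsTimeDerivOn U U' Set.univ
  waveeq : IsWaveWith U (fun _ _ => 0) Set.univ
  cont : EnergyContinuousOn U U' Set.univ
  finite : FiniteEnergyOn U U' Set.univ

/-- radial derivative centered at `x₀` -/
def radDerivAt (x₀ : Spc d) (f : Spc d → ℝ) (x : Spc d) : ℝ :=
  (inner ℝ (gradient f x) (‖x - x₀‖⁻¹ • (x - x₀)) : ℝ)

def radDeriv (f : Spc d → ℝ) (x : Spc d) : ℝ := radDerivAt 0 f x

/-- squared tangential gradient (w.r.t. spheres centered at `x₀`) -/
def tangSqAt (x₀ : Spc d) (f : Spc d → ℝ) (x : Spc d) : ℝ :=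
  gradSq f x - (radDerivAt x₀ f x) ^ 2

def tangSq (f : Spc d → ℝ) (x : Spc d) : ℝ := tangSqAt 0 f x

/-- a (nonzero, finite energy) steady state of the focusing energy critical wave equation -/
structure IsSteadyState (d : ℕ) (Q : Spc d → ℝ) : Prop where
  nontrivial : Q ≠ 0
  finiteH1 : Integrable (fun x => gradSq Q x)
  memLp : MemLp Q (ENNReal.ofReal (tStar d))
  eqn : ∀ φ : Spc d → ℝ, ContDiff ℝ (⊤ : ℕ∞) φ → HasCompactSupport φ →
    ∫ x, (inner ℝ (gradient Q x) (gradient φ x) : ℝ) = ∫ x, NL d (Q x) * φ x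

-- the Lorentz-transformed space argument of the traveling wave
open Classical in
def lorentz (ℓ : Spc d) (x : Spc d) (t : ℝ) : Spc d :=
  if ℓ = 0 then x else
    x - (((inner ℝ x ℓ : ℝ) / ‖ℓ‖ ^ 2) • ℓ)
      + (Real.sqrt (1 - ‖ℓ‖ ^ 2))⁻¹ • ((((inner ℝ x ℓ : ℝ) / ‖ℓ‖ ^ 2) • ℓ) - t • ℓ)

/-- the traveling wave `Q_ℓ(x,t)` -/
def QTW (Q : Spc d → ℝ) (ℓ : Spc d) (x : Spc d) (t : ℝ) : ℝ := Q (lorentz ℓ x t)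

/-- surface integral over the sphere `{|x| = s}` -/
def sphInt (F : Spc d → ℝ) (s : ℝ) : ℝ :=
  s ^ (d - 1) *
    ∫ ω : Metric.sphere (0 : Spc d) 1, F (s • (ω : Spc d)) ∂((volume : Measure (Spc d)).toSphere)


/-- the first coordinate vector -/
def e₁ (d : ℕ) : Spc d := if h : 0 < d then EuclideanSpace.single (⟨0, h⟩ : Fin d) 1 else 0

/-- the partial derivative `∂₁ f` in the `x₁` direction -/
def d1 (f : Spc d → ℝ) (x : Spc d) : ℝ := (inner ℝ (gradient f x) (e₁ d) : ℝ)

/-- `|∇_{x'} f|²`, the squared gradient in the directions orthogonal to `x₁` -/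
def perpSq (f : Spc d → ℝ) (x : Spc d) : ℝ := gradSq f x - (d1 f x) ^ 2


private lemma weak_bound (g : ℝ → ℝ) (S : Set ℝ) (hS : MeasurableSet S)
    (hint : IntegrableOn g S) (hnn : 0 ≤ᵐ[volume.restrict S] g)
    (lam : ℝ) (hlam : 0 < lam) :
    volume {t : ℝ | ∃ τ, 0 < τ ∧ lam * τ < ∫ s in Ioo (t - τ) (t + τ) ∩ S, g s}
      ≤ ENNReal.ofReal (8 * (∫ s in S, g s) / lam) := by
  set A := ∫ s in S, g s with hA
  have hA0 : 0 ≤ A := setIntegral_nonneg_of_ae_restrict hnn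
  set E := {t : ℝ | ∃ τ, 0 < τ ∧ lam * τ < ∫ s in Ioo (t - τ) (t + τ) ∩ S, g s} with hE
  have hmem : ∀ t ∈ E, ∃ τ, 0 < τ ∧ lam * τ < ∫ s in Ioo (t - τ) (t + τ) ∩ S, g s :=
    fun t ht => ht
  choose! r hr0 hrI using hmem
  have hsub : ∀ (t τ : ℝ), (∫ s in Ioo (t - τ) (t + τ) ∩ S, g s) ≤ A := by
    intro t τ
    exact setIntegral_mono_set hint hnn (HasSubset.Subset.eventuallyLE inter_subset_right)
  have hrR : ∀ t ∈ E, r t ≤ A / lam := by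
    intro t ht
    rw [le_div_iff₀ hlam]
    have h1 := hrI t ht
    have h2 := hsub t (r t)
    nlinarith
  obtain ⟨u, huE, hdisj, hcov⟩ :=
    Vitali.exists_disjoint_subfamily_covering_enlargement_closedBall E (fun t => t) r
      (A / lam) hrR 4 (by norm_num)
  -- countability of u
  have hqex : ∀ b ∈ u, ∃ q : ℚ, b - r b < (q : ℝ) ∧ (q : ℝ) < b + r b := by
    intro b hb
    exact exists_rat_btwn (by have := hr0 b (huE hb); linarith)
  choose! q hq1 hq2 using hqex
  have hqmem : ∀ b ∈ u, (q b : ℝ) ∈ closedBall b (r b) := by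
    intro b hb
    rw [mem_closedBall, Real.dist_eq, abs_le]
    have := hq1 b hb; have := hq2 b hb
    constructor <;> linarith
  have hucnt : u.Countable := by
    apply countable_of_injective_of_countable_image (f := q) ?_ (Set.to_countable _)
    intro b hb b' hb' hqq
    by_contra hne
    have hd : Disjoint (closedBall b (r b)) (closedBall b' (r b')) := hdisj hb hb' hne
    have h2 : ((q b : ℝ)) ∈ closedBall b' (r b') := by rw [hqq]; exact hqmem b' hb'
    exact (Set.disjoint_left.mp hd (hqmem b hb)) h2
  -- covering
  have hEcov : E ⊆ ⋃ b ∈ u, closedBall b (4 * r b) := by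
    intro a ha
    obtain ⟨b, hb, hsub'⟩ := hcov a ha
    exact mem_biUnion hb (hsub' (mem_closedBall_self (hr0 a ha).le))
  calc volume E ≤ volume (⋃ b ∈ u, closedBall b (4 * r b)) := measure_mono hEcov
    _ ≤ ∑' b : u, volume (closedBall (b : ℝ) (4 * r b)) := measure_biUnion_le volume hucnt _
    _ = ∑' b : u, ENNReal.ofReal (8 * r b) := by
        refine tsum_congr fun b => ?_
        rw [Real.volume_closedBall]
        congr 1; ring
    _ ≤ ENNReal.ofReal (8 * A / lam) := by
        refine Summable.tsum_le_of_sum_le ENNReal.summable fun v => ?_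
        have hr0' : ∀ b : u, 0 ≤ r b := fun b => (hr0 b (huE b.2)).le
        rw [← ENNReal.ofReal_sum_of_nonneg (fun b _ => by nlinarith [hr0' b])]
        apply ENNReal.ofReal_le_ofReal
        -- key : lam * sum of radii ≤ A
        have hkey : ∑ b ∈ v, lam * r b ≤ A := by
          have hdisj2 : (↑v : Set u).Pairwise
              (Function.onFun Disjoint fun b : u => Ioo ((b : ℝ) - r b) ((b : ℝ) + r b) ∩ S) := by
            intro b _ b' _ hne
            have hd : Disjoint (closedBall (b : ℝ) (r b)) (closedBall (b' : ℝ) (r b')) :=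
              hdisj b.2 b'.2 (Subtype.coe_injective.ne hne)
            refine hd.mono ?_ ?_
            · exact (inter_subset_left).trans (by rw [Real.closedBall_eq_Icc]; exact Ioo_subset_Icc_self)
            · exact (inter_subset_left).trans (by rw [Real.closedBall_eq_Icc]; exact Ioo_subset_Icc_self)
          calc ∑ b ∈ v, lam * r b
              ≤ ∑ b ∈ v, ∫ s in Ioo ((b : ℝ) - r b) ((b : ℝ) + r b) ∩ S, g s :=
                Finset.sum_le_sum fun b _ => (hrI b (huE b.2)).le
            _ = ∫ s in ⋃ b ∈ v, (Ioo ((b : ℝ) - r b) ((b : ℝ) + r b) ∩ S), g s := by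
                exact (integral_biUnion_finset v (fun b _ => (measurableSet_Ioo.inter hS)) hdisj2
                  (fun b _ => hint.mono_set inter_subset_right)).symm
            _ ≤ A := setIntegral_mono_set hint hnn
                (HasSubset.Subset.eventuallyLE (by
                  simp only [iUnion_subset_iff]
                  exact fun b _ => inter_subset_right))
        calc ∑ b ∈ v, 8 * r b = (8 / lam) * ∑ b ∈ v, lam * r b := by
              rw [Finset.mul_sum]
              refine Finset.sum_congr rfl fun b _ => ?_
              field_simp
          _ ≤ (8 / lam) * A := by
              apply mul_le_mul_of_nonneg_left hkey (by positivity)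
          _ = 8 * A / lam := by ring

private lemma sum_Ioc_dyadic (f : ℝ → ℝ) (T : ℝ) (hT : 0 < T) :
    ∀ N : ℕ, IntegrableOn f (Ioc (T / 2 ^ N) T) →
    ∑ k ∈ Finset.range N, ∫ t in Ioc (T / 2 ^ (k + 1)) (T / 2 ^ k), f t
      = ∫ t in Ioc (T / 2 ^ N) T, f t := by
  intro N
  induction N with
  | zero => intro _; simp
  | succ n ih =>
    intro hint
    have h1 : T / 2 ^ (n + 1) ≤ T / 2 ^ n := by
      gcongr <;> first | exact hT.le | norm_num | exact Nat.le_succ n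
    have h2 : T / 2 ^ n ≤ T := by
      apply div_le_self hT.le
      exact one_le_pow₀ one_le_two
    have hu : Ioc (T / 2 ^ (n + 1)) (T / 2 ^ n) ∪ Ioc (T / 2 ^ n) T = Ioc (T / 2 ^ (n + 1)) T :=
      Ioc_union_Ioc_eq_Ioc h1 h2
    have hi1 : IntegrableOn f (Ioc (T / 2 ^ (n + 1)) (T / 2 ^ n)) :=
      hint.mono_set (Ioc_subset_Ioc le_rfl h2)
    have hi2 : IntegrableOn f (Ioc (T / 2 ^ n) T) := hint.mono_set (Ioc_subset_Ioc h1 le_rfl)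
    rw [Finset.sum_range_succ, ih hi2, ← hu,
      setIntegral_union (Ioc_disjoint_Ioc_of_le le_rfl) measurableSet_Ioc hi1 hi2]
    ring

private lemma pigeonhole_dyadic (d : ℕ) (hd : 3 ≤ d) (δ C₀ : ℝ) (hδ : 0 < δ)
    (g : ℝ → ℝ) (hmeas : Measurable g) (hnonneg : ∀ t ∈ Set.Ioo (0 : ℝ) δ, 0 ≤ g t)
    (hloc : LocallyIntegrableOn g (Set.Ioo 0 δ))
    (hbound : ∀ t₁ t₂ : ℝ, 0 < t₁ → 10 * t₁ < t₂ → t₂ < δ →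
      (∫ t in Set.Ioc t₁ t₂, g t / t) ≤ C₀ * (Real.log (t₂ / t₁)) ^ ((d : ℝ) / (d + 1)))
    (T η : ℝ) (hT : 0 < T) (hTδ : T < δ) (hη : 0 < η) :
    ∃ μ : ℝ, 0 < μ ∧ 2 * μ ≤ T ∧ (∫ t in Ioc μ (2 * μ), g t / t) ≤ η := by
  set p : ℝ := (d : ℝ) / (d + 1) with hp
  have hd1 : (0 : ℝ) < (d : ℝ) + 1 := by positivity
  have hp1 : p < 1 := by
    rw [hp, div_lt_one hd1]; linarith
  have hy : 0 < 1 - p := by linarith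
  have hlog2 : 0 ≤ Real.log 2 := Real.log_nonneg one_le_two
  -- choose N large
  have htends : Tendsto (fun n : ℕ => C₀ * Real.log 2 ^ p * (n : ℝ) ^ (p - 1)) atTop (𝓝 0) := by
    have h1 : Tendsto (fun x : ℝ => x ^ (p - 1)) atTop (𝓝 0) := by
      have := tendsto_rpow_neg_atTop hy
      simpa [neg_sub] using this
    have h2 := (h1.comp tendsto_natCast_atTop_atTop).const_mul (C₀ * Real.log 2 ^ p)
    simpa using h2
  obtain ⟨N₀, hN₀⟩ := Filter.eventually_atTop.mp (htends.eventually (eventually_le_nhds hη))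
  set N := max N₀ 4 with hN
  have hN4 : 4 ≤ N := le_max_right _ _
  have hNpos : 0 < N := by omega
  have hNR : (0 : ℝ) < (N : ℝ) := by exact_mod_cast hNpos
  have h16 : (16 : ℝ) ≤ 2 ^ N := by
    calc (16 : ℝ) = 2 ^ 4 := by norm_num
      _ ≤ 2 ^ N := by
          apply pow_le_pow_right₀ one_le_two hN4
  have h2Npos : (0 : ℝ) < 2 ^ N := by positivity
  have h2N : 10 * (T / 2 ^ N) < T := by
    rw [← mul_div_assoc, div_lt_iff₀ h2Npos]
    nlinarith
  have hIcc : Icc (T / 2 ^ N) T ⊆ Ioo 0 δ := fun x hx =>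
    ⟨lt_of_lt_of_le (by positivity) hx.1, lt_of_le_of_lt hx.2 hTδ⟩
  have hgI : IntegrableOn g (Ioc (T / 2 ^ N) T) :=
    (hloc.integrableOn_compact_subset hIcc isCompact_Icc).mono_set Ioc_subset_Icc_self
  have hdivI : IntegrableOn (fun t => g t / t) (Ioc (T / 2 ^ N) T) := by
    apply Integrable.mono' (hgI.const_mul (2 ^ N / T))
    · exact (hmeas.div measurable_id).aestronglyMeasurable
    · rw [ae_restrict_iff' measurableSet_Ioc]
      refine ae_of_all _ fun t ht => ?_
      have ht0 : 0 < t := lt_of_lt_of_le (by positivity) ht.1.le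
      have hgt0 : 0 ≤ g t := hnonneg t ⟨ht0, lt_of_le_of_lt ht.2 hTδ⟩
      rw [Real.norm_eq_abs, abs_of_nonneg (div_nonneg hgt0 ht0.le)]
      have h1 : g t / t ≤ g t / (T / 2 ^ N) := by
        gcongr <;> first | exact hgt0 | positivity | exact ht.1.le
      have h2 : g t / (T / 2 ^ N) = 2 ^ N / T * g t := by
        field_simp
      linarith [h2 ▸ h1]
  set a : ℕ → ℝ := fun k => ∫ t in Ioc (T / 2 ^ (k + 1)) (T / 2 ^ k), g t / t with ha
  have hsum : ∑ k ∈ Finset.range N, a k = ∫ t in Ioc (T / 2 ^ N) T, g t / t :=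
    sum_Ioc_dyadic _ T hT N hdivI
  have hS : (∫ t in Ioc (T / 2 ^ N) T, g t / t) ≤ C₀ * ((N : ℝ) * Real.log 2) ^ p := by
    have hb := hbound (T / 2 ^ N) T (by positivity) h2N hTδ
    have hq : T / (T / 2 ^ N) = 2 ^ N := by field_simp
    rwa [hq, Real.log_pow] at hb
  have hkey : C₀ * ((N : ℝ) * Real.log 2) ^ p / N ≤ η := by
    have h1 : ((N : ℝ) * Real.log 2) ^ p = (N : ℝ) ^ p * Real.log 2 ^ p :=
      Real.mul_rpow hNR.le hlog2
    have h2 : (N : ℝ) ^ (p - 1) = (N : ℝ) ^ p / (N : ℝ) := by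
      rw [Real.rpow_sub hNR, Real.rpow_one]
    have h3 := hN₀ N (le_max_left _ _)
    rw [h2] at h3
    calc C₀ * ((N : ℝ) * Real.log 2) ^ p / N = C₀ * Real.log 2 ^ p * ((N : ℝ) ^ p / N) := by
          rw [h1]; ring
      _ ≤ η := h3
  have hex : ∃ k ∈ Finset.range N, a k ≤ (∑ i ∈ Finset.range N, a i) / N := by
    by_contra h
    push_neg at h
    have hlt : ∑ i ∈ Finset.range N, ((∑ i ∈ Finset.range N, a i) / N) <
        ∑ i ∈ Finset.range N, a i :=
      Finset.sum_lt_sum_of_nonempty (Finset.nonempty_range_iff.mpr hNpos.ne') h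
    rw [Finset.sum_const, Finset.card_range, nsmul_eq_mul,
      mul_div_cancel₀ _ hNR.ne'] at hlt
    exact lt_irrefl _ hlt
  obtain ⟨k, hk, hak⟩ := hex
  have h2k : 2 * (T / 2 ^ (k + 1)) = T / 2 ^ k := by
    rw [pow_succ]
    field_simp
  refine ⟨T / 2 ^ (k + 1), by positivity, ?_, ?_⟩
  · rw [h2k]
    exact div_le_self hT.le (one_le_pow₀ one_le_two)
  · rw [h2k]
    calc a k ≤ (∑ i ∈ Finset.range N, a i) / N := hak
      _ ≤ C₀ * ((N : ℝ) * Real.log 2) ^ p / N := by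
          gcongr
          rw [hsum]; exact hS
      _ ≤ η := hkey

private lemma step_lemma (d : ℕ) (hd : 3 ≤ d) (δ C₀ : ℝ) (hδ : 0 < δ)
    (g : ℝ → ℝ) (hmeas : Measurable g) (hnonneg : ∀ t ∈ Set.Ioo (0 : ℝ) δ, 0 ≤ g t)
    (hloc : LocallyIntegrableOn g (Set.Ioo 0 δ))
    (hbound : ∀ t₁ t₂ : ℝ, 0 < t₁ → 10 * t₁ < t₂ → t₂ < δ →
      (∫ t in Set.Ioc t₁ t₂, g t / t) ≤ C₀ * (Real.log (t₂ / t₁)) ^ ((d : ℝ) / (d + 1)))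
    (j : ℕ) (T : ℝ) (hT : 0 < T) (hTδ : T < δ) :
    ∃ μ : ℝ, 0 < μ ∧ 2 * μ ≤ T ∧
      (μ⁻¹ * ∫ t in Ioc μ (2 * μ), g t) ≤ 2 / ((j : ℝ) + 1) ∧
      (∃ t ∈ Ioo (4 * μ / 3) (13 * μ / 9), ∀ τ : ℝ, 0 < τ → τ < t / 16 →
        τ⁻¹ * ∫ s in Ioo (t - τ) (t + τ), g s ≤ 400 / ((j : ℝ) + 1)) ∧
      (∃ t' ∈ Ioo (14 * μ / 9) (5 * μ / 3), ∀ τ : ℝ, 0 < τ → τ < t' / 16 →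
        τ⁻¹ * ∫ s in Ioo (t' - τ) (t' + τ), g s ≤ 400 / ((j : ℝ) + 1)) := by
  have hj1 : (0 : ℝ) < (j : ℝ) + 1 := by positivity
  obtain ⟨μ, hμ0, h2μT, haη⟩ := pigeonhole_dyadic d hd δ C₀ hδ g hmeas hnonneg hloc hbound
    T (1 / ((j : ℝ) + 1)) hT hTδ (by positivity)
  have h2μδ : 2 * μ < δ := lt_of_le_of_lt h2μT hTδ
  set S : Set ℝ := Ioc μ (2 * μ) with hSdef
  have hSsub : S ⊆ Ioo 0 δ := fun x hx => ⟨lt_trans hμ0 hx.1, lt_of_le_of_lt hx.2 h2μδ⟩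
  have hgS : IntegrableOn g S := by
    have : Icc μ (2 * μ) ⊆ Ioo 0 δ := fun x hx =>
      ⟨lt_of_lt_of_le hμ0 hx.1, lt_of_le_of_lt hx.2 h2μδ⟩
    exact (hloc.integrableOn_compact_subset this isCompact_Icc).mono_set Ioc_subset_Icc_self
  have hnnS : 0 ≤ᵐ[volume.restrict S] g :=
    (ae_restrict_iff' measurableSet_Ioc).mpr (ae_of_all _ fun t ht => hnonneg t (hSsub ht))
  set a := ∫ t in S, g t / t with hadef
  have ha0 : 0 ≤ a := setIntegral_nonneg measurableSet_Ioc fun t ht =>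
    div_nonneg (hnonneg t (hSsub ht)) (lt_trans hμ0 ht.1).le
  have hdivS : IntegrableOn (fun t => g t / t) S := by
    apply Integrable.mono' (hgS.const_mul μ⁻¹)
    · exact (hmeas.div measurable_id).aestronglyMeasurable
    · refine (ae_restrict_iff' measurableSet_Ioc).mpr (ae_of_all _ fun t ht => ?_)
      have ht0 : 0 < t := lt_trans hμ0 ht.1
      have hgt0 : 0 ≤ g t := hnonneg t (hSsub ht)
      rw [Real.norm_eq_abs, abs_of_nonneg (div_nonneg hgt0 ht0.le)]
      rw [div_eq_inv_mul]
      exact mul_le_mul_of_nonneg_right (by rw [inv_le_inv₀ ht0 hμ0]; exact ht.1.le) hgt0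
  set A := ∫ t in S, g t with hAdef
  have hA0 : 0 ≤ A := setIntegral_nonneg measurableSet_Ioc fun t ht => hnonneg t (hSsub ht)
  have hA2 : A ≤ 2 * μ * a := by
    have h1 : ∀ t ∈ S, g t ≤ 2 * μ * (g t / t) := by
      intro t ht
      have ht0 : 0 < t := lt_trans hμ0 ht.1
      have hgt0 : 0 ≤ g t := hnonneg t (hSsub ht)
      have heq : g t / t * t = g t := div_mul_cancel₀ _ ht0.ne'
      nlinarith [div_nonneg hgt0 ht0.le, ht.2]
    calc A ≤ ∫ t in S, 2 * μ * (g t / t) :=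
          setIntegral_mono_on hgS (hdivS.const_mul _) measurableSet_Ioc h1
      _ = 2 * μ * a := by rw [hadef, integral_const_mul]
  have haub : a ≤ 1 / ((j : ℝ) + 1) := haη
  set lam : ℝ := 400 / ((j : ℝ) + 1) with hlamdef
  have hlam : 0 < lam := by positivity
  have hvol := weak_bound g S measurableSet_Ioc hgS hnnS lam hlam
  have hsmall : 8 * A / lam ≤ μ / 25 := by
    rw [div_le_iff₀ hlam]
    have h1 : μ / 25 * lam = 16 * μ / ((j : ℝ) + 1) := by
      rw [hlamdef]; field_simp; ring
    rw [h1]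
    have h2 : A ≤ 2 * μ * (1 / ((j : ℝ) + 1)) := by
      calc A ≤ 2 * μ * a := hA2
        _ ≤ 2 * μ * (1 / ((j : ℝ) + 1)) := by
            apply mul_le_mul_of_nonneg_left haub (by positivity)
    rw [div_eq_inv_mul] at h2 ⊢
    nlinarith [hj1, hμ0, inv_pos.mpr hj1]
  have hsel : ∀ b1 b2 : ℝ, 4 / 3 * μ ≤ b1 → b2 ≤ 5 / 3 * μ → b2 - b1 = μ / 9 →
      ∃ t ∈ Ioo b1 b2, ∀ τ : ℝ, 0 < τ → τ < t / 16 →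
        τ⁻¹ * ∫ s in Ioo (t - τ) (t + τ), g s ≤ 400 / ((j : ℝ) + 1) := by
    intro b1 b2 hb1 hb2 hlen
    have hnotsub : ¬ (Ioo b1 b2 ⊆
        {t : ℝ | ∃ τ, 0 < τ ∧ lam * τ < ∫ s in Ioo (t - τ) (t + τ) ∩ S, g s}) := by
      intro hsub
      have h1 : volume (Ioo b1 b2) ≤ ENNReal.ofReal (8 * A / lam) :=
        le_trans (measure_mono hsub) hvol
      rw [Real.volume_Ioo] at h1
      have h2 : b2 - b1 ≤ 8 * A / lam :=
        (ENNReal.ofReal_le_ofReal_iff (by positivity)).mp h1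
      rw [hlen] at h2
      linarith
    obtain ⟨t, htJ, htE⟩ := Set.not_subset.mp hnotsub
    refine ⟨t, htJ, fun τ hτ0 hτ16 => ?_⟩
    have hb1t : 4 / 3 * μ ≤ t := le_trans hb1 htJ.1.le
    have htb2 : t ≤ 5 / 3 * μ := le_trans htJ.2.le hb2
    have hIoosub : Ioo (t - τ) (t + τ) ⊆ S := by
      intro s hs
      constructor
      · linarith [hs.1]
      · linarith [hs.2]
    have hne : ¬ (lam * τ < ∫ s in Ioo (t - τ) (t + τ) ∩ S, g s) :=
      fun h => htE ⟨τ, hτ0, h⟩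
    rw [inter_eq_self_of_subset_left hIoosub] at hne
    have hle : (∫ s in Ioo (t - τ) (t + τ), g s) ≤ lam * τ := not_lt.mp hne
    calc τ⁻¹ * ∫ s in Ioo (t - τ) (t + τ), g s ≤ τ⁻¹ * (lam * τ) :=
          mul_le_mul_of_nonneg_left hle (by positivity)
      _ = lam := by field_simp
  refine ⟨μ, hμ0, h2μT, ?_, ?_, ?_⟩
  · calc μ⁻¹ * A ≤ μ⁻¹ * (2 * μ * a) :=
          mul_le_mul_of_nonneg_left hA2 (by positivity)
      _ = 2 * a := by field_simp
      _ ≤ 2 / ((j : ℝ) + 1) := by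
          rw [div_eq_mul_one_div]
          exact mul_le_mul_of_nonneg_left haub (by norm_num)
  · obtain ⟨t, ht, hb⟩ := hsel (4 * μ / 3) (13 * μ / 9) (by linarith) (by linarith) (by ring)
    exact ⟨t, ht, hb⟩
  · obtain ⟨t, ht, hb⟩ := hsel (14 * μ / 9) (5 * μ / 3) (by linarith) (by linarith) (by ring)
    exact ⟨t, ht, hb⟩


/-- selection of good time sequences from a Morawetz-type logarithmic
average bound. -/
theorem time_sequence_selection
    (d : ℕ) (hd : 3 ≤ d) (δ C₀ : ℝ) (hδ : 0 < δ) (hC₀ : 0 < C₀)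
    (g : ℝ → ℝ) (hmeas : Measurable g) (hnonneg : ∀ t ∈ Set.Ioo (0 : ℝ) δ, 0 ≤ g t)
    (hloc : LocallyIntegrableOn g (Set.Ioo 0 δ))
    (hbound : ∀ t₁ t₂ : ℝ, 0 < t₁ → 10 * t₁ < t₂ → t₂ < δ →
      (∫ t in Set.Ioc t₁ t₂, g t / t) ≤ C₀ * (Real.log (t₂ / t₁)) ^ ((d : ℝ) / (d + 1))) :
    ∃ μ tj tj' : ℕ → ℝ,
      (∀ j, 0 < μ j) ∧ Antitone μ ∧ Tendsto μ atTop (nhds 0) ∧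
      (∀ j, tj j ∈ Set.Ioo (4 * μ j / 3) (13 * μ j / 9)) ∧
      (∀ j, tj' j ∈ Set.Ioo (14 * μ j / 9) (5 * μ j / 3)) ∧
      Tendsto (fun j => (μ j)⁻¹ * ∫ t in Set.Ioc (μ j) (2 * μ j), g t) atTop (nhds 0) ∧
      (∀ ε : ℝ, 0 < ε → ∀ᶠ j in atTop,
        (∀ τ : ℝ, 0 < τ → τ < tj j / 16 →
          τ⁻¹ * ∫ t in Set.Ioo (tj j - τ) (tj j + τ), g t ≤ ε) ∧
        (∀ τ : ℝ, 0 < τ → τ < tj' j / 16 →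
          τ⁻¹ * ∫ t in Set.Ioo (tj' j - τ) (tj' j + τ), g t ≤ ε)) := by
  -- the property obtained at each step
  set Q : ℕ → ℝ → ℝ → Prop := fun j T μ =>
    0 < μ ∧ 2 * μ ≤ T ∧
      (μ⁻¹ * ∫ t in Ioc μ (2 * μ), g t) ≤ 2 / ((j : ℝ) + 1) ∧
      (∃ t ∈ Ioo (4 * μ / 3) (13 * μ / 9), ∀ τ : ℝ, 0 < τ → τ < t / 16 →
        τ⁻¹ * ∫ s in Ioo (t - τ) (t + τ), g s ≤ 400 / ((j : ℝ) + 1)) ∧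
      (∃ t' ∈ Ioo (14 * μ / 9) (5 * μ / 3), ∀ τ : ℝ, 0 < τ → τ < t' / 16 →
        τ⁻¹ * ∫ s in Ioo (t' - τ) (t' + τ), g s ≤ 400 / ((j : ℝ) + 1)) with hQ
  have step' : ∀ (j : ℕ) (T : ℝ), ∃ μ : ℝ, (0 < T → T < δ → Q j T μ) := by
    intro j T
    by_cases h : 0 < T ∧ T < δ
    · obtain ⟨μ, h1, h2, h3, h4, h5⟩ :=
        step_lemma d hd δ C₀ hδ g hmeas hnonneg hloc hbound j T h.1 h.2
      exact ⟨μ, fun _ _ => ⟨h1, h2, h3, h4, h5⟩⟩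
    · exact ⟨1, fun h1 h2 => absurd ⟨h1, h2⟩ h⟩
  choose F hF using step'
  set μs : ℕ → ℝ := fun j =>
    Nat.rec (motive := fun _ => ℝ) (F 0 (δ / 2)) (fun n ih => F (n + 1) ih) j with hμs
  have hrecS : ∀ j, μs (j + 1) = F (j + 1) (μs j) := fun j => rfl
  have hQ0 : Q 0 (δ / 2) (μs 0) := hF 0 (δ / 2) (by linarith) (by linarith)
  have inv : ∀ j, 0 < μs j ∧ μs j < δ ∧ Q j (if j = 0 then δ / 2 else μs (j - 1)) (μs j) := by
    intro j
    induction j with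
    | zero => exact ⟨hQ0.1, by have := hQ0.2.1; linarith, by simpa using hQ0⟩
    | succ n ih =>
      have h := hF (n + 1) (μs n) ih.1 ih.2.1
      rw [← hrecS n] at h
      exact ⟨h.1, by have := h.2.1; linarith [ih.1, ih.2.1], by simpa using h⟩
  have hpos : ∀ j, 0 < μs j := fun j => (inv j).1
  have hhalf : ∀ j, 2 * μs (j + 1) ≤ μs j := fun j => ((inv (j + 1)).2.2).2.1
  have h2μδ : ∀ j, 2 * μs j < δ := by
    intro j
    cases j with
    | zero => have := hQ0.2.1; linarith
    | succ n => linarith [hhalf n, (inv n).2.1]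
  -- extract the point sequences
  have hex1 : ∀ j, ∃ t, t ∈ Ioo (4 * μs j / 3) (13 * μs j / 9) ∧
      ∀ τ : ℝ, 0 < τ → τ < t / 16 →
        τ⁻¹ * ∫ s in Ioo (t - τ) (t + τ), g s ≤ 400 / ((j : ℝ) + 1) := fun j =>
    ((inv j).2.2).2.2.2.1
  have hex2 : ∀ j, ∃ t, t ∈ Ioo (14 * μs j / 9) (5 * μs j / 3) ∧
      ∀ τ : ℝ, 0 < τ → τ < t / 16 →
        τ⁻¹ * ∫ s in Ioo (t - τ) (t + τ), g s ≤ 400 / ((j : ℝ) + 1) := fun j =>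
    ((inv j).2.2).2.2.2.2
  choose tj htj using hex1
  choose tj' htj' using hex2
  have hgeo : ∀ j, μs j ≤ δ / 2 * (1 / 2) ^ j := by
    intro j
    induction j with
    | zero => have := hQ0.2.1; simpa using by linarith
    | succ n ih =>
      have h1 := hhalf n
      have h2 : ((1 : ℝ) / 2) ^ (n + 1) = (1 / 2) ^ n * (1 / 2) := pow_succ _ _
      rw [h2]
      linarith
  refine ⟨μs, tj, tj', hpos, ?_, ?_, fun j => (htj j).1, fun j => (htj' j).1, ?_, ?_⟩
  · exact antitone_nat_of_succ_le fun j => by linarith [hhalf j, hpos (j + 1)]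
  · refine tendsto_of_tendsto_of_tendsto_of_le_of_le tendsto_const_nhds ?_
      (fun j => (hpos j).le) hgeo
    have h := (tendsto_pow_atTop_nhds_zero_of_lt_one (by norm_num : (0:ℝ) ≤ 1 / 2)
      (by norm_num : (1:ℝ) / 2 < 1)).const_mul (δ / 2)
    simpa using h
  · -- average tendsto 0
    have hub : ∀ j, (μs j)⁻¹ * ∫ t in Set.Ioc (μs j) (2 * μs j), g t ≤ 2 / ((j : ℝ) + 1) :=
      fun j => ((inv j).2.2).2.2.1
    have hlb : ∀ j, 0 ≤ (μs j)⁻¹ * ∫ t in Set.Ioc (μs j) (2 * μs j), g t := by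
      intro j
      apply mul_nonneg (inv_nonneg.mpr (hpos j).le)
      apply setIntegral_nonneg measurableSet_Ioc
      intro t ht
      exact hnonneg t ⟨lt_trans (hpos j) ht.1, lt_of_le_of_lt ht.2 (h2μδ j)⟩
    have hto : Tendsto (fun j : ℕ => 2 / ((j : ℝ) + 1)) atTop (𝓝 0) := by
      have h := tendsto_one_div_add_atTop_nhds_zero_nat.const_mul (2 : ℝ)
      simpa [mul_one_div, div_eq_mul_inv] using h
    exact tendsto_of_tendsto_of_tendsto_of_le_of_le tendsto_const_nhds hto hlb hub
  · intro ε hε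
    obtain ⟨J, hJ⟩ := exists_nat_gt (400 / ε)
    have hJ' : ∀ j : ℕ, J ≤ j → 400 / ((j : ℝ) + 1) ≤ ε := by
      intro j hj
      have hj1 : (0 : ℝ) < (j : ℝ) + 1 := by positivity
      have hJj : (J : ℝ) ≤ (j : ℝ) := by exact_mod_cast hj
      rw [div_lt_iff₀ hε] at hJ
      rw [div_le_iff₀ hj1]
      nlinarith
    filter_upwards [eventually_ge_atTop J] with j hj
    exact ⟨fun τ h1 h2 => le_trans ((htj j).2 τ h1 h2) (hJ' j hj),
      fun τ h1 h2 => le_trans ((htj' j).2 τ h1 h2) (hJ' j hj)⟩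



end SR
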